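/- (Proposition 5, variance-aware quartic game under multiplicative noise.) Fix integers N ≥ 1 and I ≥ 2. On a probability space, let x_0 be square-integrable with x_0⁴ integrable, and let ε_1,…,ε_N be independent, mean-zero, square-integrable real random variables independent of x_0. Consider the dynamics x_{k+1} = ā_k·x_k + Σ_{i=1}^I b̄_{ik}·u_{ik} + (x_k − x̄_k)·ε_{k+1}, k = 0,…,N−1, where x̄_k = E[x_k], and the cost E[L_i] with L_i = q_{iN}·var(x_N) + q̄_{iN}·x̄_N⁴ + Σ_{k=0}^{N−1} (q_{ik}·var(x_k) + q̄_{ik}·x̄_k⁴ + r_{ik}·var(u_{ik}) + r̄_{ik}·ū_{ik}⁴), all weights positive. Define backwards ᾱ_{iN} = q̄_{iN}, α_{iN} = q_{iN}; κ_{ik} = the real cube root of ᾱ_{i,k+1}·b̄_{ik}/r̄_{ik}, c̄_{ik} = κ_{ik}/(1 + κ_{ik}·b̄_{ik}), c_{ik} = α_{i,k+1}·b̄_{ik}/(r_{ik} + α_{i,k+1}·b̄_{ik}²); Ē_k, E_k the I×I matrices with unit diagonal and off-diagonal entries c̄_{ik}·b̄_{jk}, c_{ik}·b̄_{jk}; ᾱ_{ik}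 = q̄_{ik} + r̄_{ik}·((Ē_k⁻¹·c̄_k)_i·ā_k)⁴ + ᾱ_{i,k+1}·(ā_k − Σ_j (Ē_k⁻¹·c̄_k)_j·ā_k·b̄_{jk})⁴; α_{ik} = q_{ik} + r_{ik}·((E_k⁻¹·c_k)_i·ā_k)² + α_{i,k+1}·(ā_k − Σ_j (E_k⁻¹·c_k)_j·ā_k·b̄_{jk})² + α_{i,k+1}·E[ε_{k+1}²]. Assume for every k that Ē_k and E_k are invertible, 1 + κ_{ik}·b̄_{ik} > 0, and r_{ik} + α_{i,k+1}·b̄_{ik}² > 0 for all i. Then the feedback strategies u*_{ik} = −(E_k⁻¹·c_k)_i·ā_k·(x_k − x̄_k) − (Ē_k⁻¹·c̄_k)_i·ā_k·x̄_k form a Nash equilibrium: for each agent i, if every agent j ≠ i plays u*_{jk} along the realized trajectory, then among all adapted square-integrable strategies of agent i (u_{ik} measurable with respect to σ(x_0, ε_1, …, ε_k), with ū_{ik}⁴ finite), the expected cost E[L_i] is minimized by playing u*_{ik} along the resulting trajectory. -/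

import Mathlib

open MeasureTheory ProbabilityTheory

/-- The σ-algebra `σ(x₀, ε₁, …, ε_k)` generated by the initial state and the
noises up to time `k`. -/
def sigmaUpTo {Ω : Type*} (x0 : Ω → ℝ) (eps : ℕ → Ω → ℝ) (k : ℕ) :
    MeasurableSpace Ω :=
  MeasurableSpace.comap x0 inferInstance
    ⊔ ⨆ j ∈ Finset.Icc 1 k, MeasurableSpace.comap (eps j) inferInstance

/-- The state-and-mean-field-type feedback
`−(Ē⁻¹·c̄)_j·ā·x̄ − (E⁻¹·c)_j·ā·(x − x̄)` of agent `j`. -/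
noncomputable def mfFeedback {I : ℕ} (Ebar E : Matrix (Fin I) (Fin I) ℝ)
    (cbar c : Fin I → ℝ) (a m ξ : ℝ) (j : Fin I) : ℝ :=
  -(Ebar⁻¹.mulVec cbar j) * a * m - (E⁻¹.mulVec c j) * a * (ξ - m)

/-- The variance-aware quartic cost of an agent along a state trajectory `x`
with own controls `v`. -/
noncomputable def quarticVarCost {Ω : Type*} [MeasurableSpace Ω]
    (μ : Measure Ω) (N : ℕ) (qN qbarN : ℝ) (q qbar r rbar : ℕ → ℝ)
    (x v : ℕ → Ω → ℝ) : ℝ :=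
  qN * variance (x N) μ + qbarN * (∫ ω, x N ω ∂μ) ^ 4
    + ∑ k ∈ Finset.range N,
        (q k * variance (x k) μ + qbar k * (∫ ω, x k ω ∂μ) ^ 4
          + r k * variance (v k) μ + rbar k * (∫ ω, v k ω ∂μ) ^ 4)

set_option linter.unusedSectionVars false

/-! ### Auxiliary algebra lemmas -/

private lemma quartic_tangent (t s : ℝ) : s^4 + 4*s^3*(t - s) ≤ t^4 := by
  nlinarith [sq_nonneg (t - s), sq_nonneg (t + s), sq_nonneg s, sq_nonneg t]

private lemma quad_step {r al b cc : ℝ} (A y v : ℝ) (hden : 0 < r + al * b ^ 2)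
    (hc : cc = al * b / (r + al * b ^ 2)) :
    (r * (cc * A) ^ 2 + al * (A - b * (cc * A)) ^ 2) * y ^ 2
      ≤ r * v ^ 2 + al * (A * y + b * v) ^ 2 := by
  have hc' : cc * (r + al * b ^ 2) = al * b := by
    rw [hc]; field_simp
  have key : r * v ^ 2 + al * (A * y + b * v) ^ 2
      - (r * (cc * A) ^ 2 + al * (A - b * (cc * A)) ^ 2) * y ^ 2
      = (r + al * b ^ 2) * (v + cc * A * y) ^ 2 := by
    linear_combination (-2*A*v*y - 2*cc*A^2*y^2) * hc'
  nlinarith [mul_nonneg hden.le (sq_nonneg (v + cc * A * y))]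

private lemma quad_step_eq {r al b cc : ℝ} (A y : ℝ) :
    r * (-(cc * A * y)) ^ 2 + al * (A * y + b * (-(cc * A * y))) ^ 2
      = (r * (cc * A) ^ 2 + al * (A - b * (cc * A)) ^ 2) * y ^ 2 := by ring

private lemma quartic_step {rb ab b kp cb : ℝ} (A m w : ℝ) (hrb : 0 < rb) (hab : 0 < ab)
    (hk : kp ^ 3 = ab * b / rb) (hden : 0 < 1 + kp * b) (hcb : cb = kp / (1 + kp * b)) :
    (rb * (cb * A) ^ 4 + ab * (A - b * (cb * A)) ^ 4) * m ^ 4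
      ≤ rb * w ^ 4 + ab * (A * m + b * w) ^ 4 := by
  set w' : ℝ := -(cb * A * m) with hw'
  set s : ℝ := A * m + b * w' with hs
  have hk' : rb * kp ^ 3 = ab * b := by rw [hk]; field_simp
  have hcb1 : cb * (1 + kp * b) = kp := by rw [hcb]; field_simp
  have hcb2 : cb = kp * (1 - b * cb) := by linear_combination hcb1
  have hkey : rb * cb ^ 3 = ab * b * (1 - b * cb) ^ 3 := by
    linear_combination rb * (cb^2 + cb*(kp*(1-b*cb)) + (kp*(1-b*cb))^2) * hcb2
      + (1 - b*cb)^3 * hk'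
  have hfoc : rb * w' ^ 3 + ab * b * s ^ 3 = 0 := by
    rw [hw', hs]; ring_nf
    linear_combination (-(A*m)^3) * hkey
  have h1 : rb * (w' ^ 4 + 4 * w' ^ 3 * (w - w')) ≤ rb * w ^ 4 := by
    have := quartic_tangent w w'
    nlinarith
  have h2 : ab * (s ^ 4 + 4 * s ^ 3 * ((A * m + b * w) - s)) ≤ ab * (A * m + b * w) ^ 4 := by
    have := quartic_tangent (A * m + b * w) s
    nlinarith
  have hval : (rb * (cb * A) ^ 4 + ab * (A - b * (cb * A)) ^ 4) * m ^ 4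
      = rb * (w' ^ 4 + 4 * w' ^ 3 * (w - w')) + ab * (s ^ 4 + 4 * s ^ 3 * ((A * m + b * w) - s))
        - 4 * (w - w') * (rb * w' ^ 3 + ab * b * s ^ 3) := by
    rw [hw', hs]; ring
  rw [hval, hfoc]
  linarith

private lemma quartic_step_eq {rb ab b cb : ℝ} (A m : ℝ) :
    rb * (-(cb * A * m)) ^ 4 + ab * (A * m + b * (-(cb * A * m))) ^ 4
      = (rb * (cb * A) ^ 4 + ab * (A - b * (cb * A)) ^ 4) * m ^ 4 := by ring

private lemma matrix_fp {I : ℕ} (M : Matrix (Fin I) (Fin I) ℝ) (hM : IsUnit M)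
    (cc bb : Fin I → ℝ) (hd : ∀ i, M i i = 1)
    (ho : ∀ i j, i ≠ j → M i j = cc i * bb j) (i : Fin I) :
    M⁻¹.mulVec cc i
      = cc i * (1 - ∑ j ∈ Finset.univ.erase i, bb j * M⁻¹.mulVec cc j) := by
  have hdet : IsUnit M.det := (Matrix.isUnit_iff_isUnit_det M).mp hM
  have h1 : M.mulVec (M⁻¹.mulVec cc) = cc := by
    rw [Matrix.mulVec_mulVec, Matrix.mul_nonsing_inv M hdet, Matrix.one_mulVec]
  have h2 := congrFun h1 i
  rw [Matrix.mulVec, dotProduct] at h2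
  rw [← Finset.add_sum_erase _ _ (Finset.mem_univ i), hd i, one_mul] at h2
  have h3 : ∑ j ∈ Finset.univ.erase i, M i j * M⁻¹.mulVec cc j
      = cc i * ∑ j ∈ Finset.univ.erase i, bb j * M⁻¹.mulVec cc j := by
    rw [Finset.mul_sum]
    refine Finset.sum_congr rfl fun j hj => ?_
    rw [ho i j (Finset.ne_of_mem_erase hj).symm]; ring
  rw [h3] at h2
  linarith

private lemma telescope_le (S g : ℕ → ℝ) :
    ∀ n, (∀ k, k < n → S k ≤ g k + S (k + 1)) →
      S 0 ≤ (∑ k ∈ Finset.range n, g k) + S n := by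
  intro n
  induction n with
  | zero => simp
  | succ n ih =>
    intro h
    have h1 := ih fun k hk => h k (hk.trans (Nat.lt_succ_self n))
    have h2 := h n (Nat.lt_succ_self n)
    rw [Finset.sum_range_succ]
    linarith

private lemma telescope_eq (S g : ℕ → ℝ) :
    ∀ n, (∀ k, k < n → S k = g k + S (k + 1)) →
      S 0 = (∑ k ∈ Finset.range n, g k) + S n := by
  intro n
  induction n with
  | zero => simp
  | succ n ih =>
    intro h
    have h1 := ih fun k hk => h k (hk.trans (Nat.lt_succ_self n))
    have h2 := h n (Nat.lt_succ_self n)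
    rw [Finset.sum_range_succ]
    linarith

private lemma sum_feedback {I : ℕ} (S : Finset (Fin I)) (bb db d : Fin I → ℝ) (ak m t : ℝ) :
    ∑ j ∈ S, bb j * (-(db j) * ak * m - d j * ak * (t - m))
      = (∑ j ∈ S, bb j * db j) * (-(ak * m)) + (∑ j ∈ S, bb j * d j) * (-(ak * (t - m))) := by
  rw [Finset.sum_mul, Finset.sum_mul, ← Finset.sum_add_distrib]
  refine Finset.sum_congr rfl fun j _ => by ring

/-! ### σ-algebra lemmas -/

section Sigma
variable {Ω : Type*} [MeasurableSpace Ω] (x0 : Ω → ℝ) (eps : ℕ → Ω → ℝ)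

private lemma sigmaUpTo_mono {k k' : ℕ} (h : k ≤ k') :
    sigmaUpTo x0 eps k ≤ sigmaUpTo x0 eps k' := by
  refine sup_le le_sup_left ?_
  refine iSup₂_le fun j hj => ?_
  refine le_trans ?_ le_sup_right
  exact le_biSup (f := fun j => MeasurableSpace.comap (eps j) inferInstance)
    (Finset.mem_Icc.mpr ⟨(Finset.mem_Icc.mp hj).1, le_trans (Finset.mem_Icc.mp hj).2 h⟩)

private lemma measurable_x0_sigmaUpTo (k : ℕ) :
    @Measurable Ω ℝ (sigmaUpTo x0 eps k) _ x0 := by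
  rw [measurable_iff_comap_le]
  exact le_sup_left

private lemma measurable_eps_sigmaUpTo {j k : ℕ} (h1 : 1 ≤ j) (h2 : j ≤ k) :
    @Measurable Ω ℝ (sigmaUpTo x0 eps k) _ (eps j) := by
  rw [measurable_iff_comap_le]
  refine le_trans ?_ le_sup_right
  exact le_biSup (f := fun j => MeasurableSpace.comap (eps j) inferInstance)
    (Finset.mem_Icc.mpr ⟨h1, h2⟩)

end Sigma

/-! ### Integration helpers -/

section Helpers
variable {Ω : Type*} [MeasurableSpace Ω] {μ : Measure Ω} [IsProbabilityMeasure μ]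

private lemma integrable_mul_L2 {F G : Ω → ℝ} (hF : MemLp F 2 μ) (hG : MemLp G 2 μ) :
    Integrable (fun ω => F ω * G ω) μ := by
  have h := hG.smul (φ := F) hF (r := 1)
  rw [← memLp_one_iff_integrable]
  exact h

private lemma memL2_mul_indep {F G : Ω → ℝ} (hF : MemLp F 2 μ) (hG : MemLp G 2 μ)
    (hind : IndepFun F G μ) : MemLp (fun ω => F ω * G ω) 2 μ := by
  have hsm : AEStronglyMeasurable (fun ω => F ω * G ω) μ :=
    hF.aestronglyMeasurable.mul hG.aestronglyMeasurable
  rw [memLp_two_iff_integrable_sq hsm]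
  have hind2 : IndepFun (fun ω => F ω ^ 2) (fun ω => G ω ^ 2) μ :=
    hind.comp (measurable_id.pow_const 2) (measurable_id.pow_const 2)
  have h := hind2.integrable_mul hF.integrable_sq hG.integrable_sq
  have : (fun ω => (F ω * G ω) ^ 2) = (fun ω => F ω ^ 2) * fun ω => G ω ^ 2 := by
    funext ω; simp [mul_pow]
  rw [this]
  exact h

private lemma integral_mul_indep_zero {F G : Ω → ℝ} (hF : AEStronglyMeasurable F μ)
    (hG : AEStronglyMeasurable G μ) (hind : IndepFun F G μ)
    (hG0 : ∫ ω, G ω ∂μ = 0) : ∫ ω, F ω * G ω ∂μ = 0 := by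
  rw [show ∫ ω, F ω * G ω ∂μ = (∫ ω, F ω ∂μ) * ∫ ω, G ω ∂μ from hind.integral_mul_eq_mul_integral hF hG, hG0, mul_zero]

private lemma variance_eq' {X : Ω → ℝ} (hX : MemLp X 2 μ) :
    variance X μ = ∫ ω, (X ω - ∫ x, X x ∂μ) ^ 2 ∂μ := by
  exact variance_eq_integral hX.aemeasurable

end Helpers

/-! ### Independence of the past and the next noise -/

section Indep
variable {Ω : Type*} [MeasurableSpace Ω] {μ : Measure Ω} [IsProbabilityMeasure μ]
  {N : ℕ} {x0 : Ω → ℝ} {eps : ℕ → Ω → ℝ}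

private lemma indep_sigmaUpTo (hx0m : Measurable x0) (hepsm : ∀ k, Measurable (eps k))
    (hindep : iIndepFun
      (fun k : Fin (N + 1) => if (k : ℕ) = 0 then x0 else eps k) μ)
    {k : ℕ} (hk : k < N) :
    Indep (sigmaUpTo x0 eps k) (MeasurableSpace.comap (eps (k + 1)) inferInstance) μ := by
  set f : Fin (N + 1) → Ω → ℝ := fun n => if (n : ℕ) = 0 then x0 else eps n with hf
  have hfm : ∀ n : Fin (N + 1), Measurable (f n) := by
    intro n; by_cases h : (n : ℕ) = 0 <;> simp only [hf, h, if_true, if_false] <;>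
      [exact hx0m; exact hepsm n]
  have h_le : ∀ n : Fin (N + 1),
      MeasurableSpace.comap (f n) inferInstance ≤ ‹MeasurableSpace Ω› :=
    fun n => (hfm n).comap_le
  have h := indep_biSup_compl h_le hindep {n : Fin (N + 1) | (n : ℕ) ≤ k}
  refine indep_of_indep_of_le_left (indep_of_indep_of_le_right h ?_) ?_
  · have hk1 : k + 1 < N + 1 := by omega
    have hmem : (⟨k + 1, hk1⟩ : Fin (N + 1)) ∈ ({n : Fin (N + 1) | (n : ℕ) ≤ k} : Set _)ᶜ := by
      simp
    have : f ⟨k + 1, hk1⟩ = eps (k + 1) := by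
      simp [hf]
    calc MeasurableSpace.comap (eps (k + 1)) inferInstance
        = MeasurableSpace.comap (f ⟨k + 1, hk1⟩) inferInstance := by rw [this]
      _ ≤ _ := le_biSup (f := fun n => MeasurableSpace.comap (f n) inferInstance) hmem
  · refine sup_le ?_ ?_
    · have h0 : ((0 : Fin (N + 1)) : ℕ) = 0 := rfl
      have hmem : (0 : Fin (N + 1)) ∈ {n : Fin (N + 1) | (n : ℕ) ≤ k} := by simp [h0]
      have : f 0 = x0 := by simp [hf, h0]
      calc MeasurableSpace.comap x0 inferInstance
          = MeasurableSpace.comap (f 0) inferInstance := by rw [this]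
        _ ≤ _ := le_biSup (f := fun n => MeasurableSpace.comap (f n) inferInstance) hmem
    · refine iSup₂_le fun j hj => ?_
      obtain ⟨hj1, hj2⟩ := Finset.mem_Icc.mp hj
      have hjN : j < N + 1 := by omega
      have hmem : (⟨j, hjN⟩ : Fin (N + 1)) ∈ {n : Fin (N + 1) | (n : ℕ) ≤ k} := by
        simp [hj2]
      have : f ⟨j, hjN⟩ = eps j := by
        simp only [hf]
        rw [if_neg (by omega)]
      calc MeasurableSpace.comap (eps j) inferInstance
          = MeasurableSpace.comap (f ⟨j, hjN⟩) inferInstance := by rw [this]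
        _ ≤ _ := le_biSup (f := fun n => MeasurableSpace.comap (f n) inferInstance) hmem

private lemma indepFun_eps' (hx0m : Measurable x0) (hepsm : ∀ k, Measurable (eps k))
    (hindep : iIndepFun
      (fun k : Fin (N + 1) => if (k : ℕ) = 0 then x0 else eps k) μ)
    {k : ℕ} (hk : k < N) {F : Ω → ℝ}
    (hF : @Measurable Ω ℝ (sigmaUpTo x0 eps k) _ F) :
    IndepFun F (eps (k + 1)) μ :=
  indep_of_indep_of_le_left (indep_sigmaUpTo hx0m hepsm hindep hk)
    (measurable_iff_comap_le.mp hF)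

/-! ### The one-step evolution of the mean and the variance -/

private lemma step_main (hx0m : Measurable x0) (hepsm : ∀ k, Measurable (eps k))
    (hepsL2 : ∀ k, 1 ≤ k → k ≤ N → MemLp (eps k) 2 μ)
    (hepsmean : ∀ k, 1 ≤ k → k ≤ N → ∫ ω, eps k ω ∂μ = 0)
    (hindep : iIndepFun
      (fun k : Fin (N + 1) => if (k : ℕ) = 0 then x0 else eps k) μ)
    {k : ℕ} (hk : k < N) (A Abar bi : ℝ) {x1 xk uk : Ω → ℝ}
    (hx2 : MemLp xk 2 μ) (hxm : @Measurable Ω ℝ (sigmaUpTo x0 eps k) _ xk)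
    (hu2 : MemLp uk 2 μ) (hum : @Measurable Ω ℝ (sigmaUpTo x0 eps k) _ uk)
    (hdyn : ∀ ω, x1 ω
      = (A * (xk ω - ∫ x, xk x ∂μ) + bi * (uk ω - ∫ x, uk x ∂μ))
        + (Abar * (∫ x, xk x ∂μ) + bi * (∫ x, uk x ∂μ))
        + (xk ω - ∫ x, xk x ∂μ) * eps (k + 1) ω) :
    MemLp x1 2 μ
      ∧ (∫ ω, x1 ω ∂μ) = Abar * (∫ x, xk x ∂μ) + bi * (∫ x, uk x ∂μ)
      ∧ variance x1 μ
          = (∫ ω, (A * (xk ω - ∫ x, xk x ∂μ) + bi * (uk ω - ∫ x, uk x ∂μ)) ^ 2 ∂μ)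
            + variance xk μ * ∫ ω, (eps (k + 1) ω) ^ 2 ∂μ := by
  set m : ℝ := ∫ x, xk x ∂μ with hm
  set ub : ℝ := ∫ x, uk x ∂μ with hub
  set y : Ω → ℝ := fun ω => xk ω - m with hy
  set v : Ω → ℝ := fun ω => uk ω - ub with hv
  set G : Ω → ℝ := fun ω => A * y ω + bi * v ω with hG
  set ε : Ω → ℝ := eps (k + 1) with hε
  set c0 : ℝ := Abar * m + bi * ub with hc0
  have hε2 : MemLp ε 2 μ := hepsL2 (k + 1) (by omega) (by omega)
  have hεmean : ∫ ω, ε ω ∂μ = 0 := hepsmean (k + 1) (by omega) (by omega)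
  have hy2 : MemLp y 2 μ := hx2.sub (memLp_const m)
  have hv2 : MemLp v 2 μ := hu2.sub (memLp_const ub)
  have hG2 : MemLp G 2 μ := (hy2.const_mul A).add (hv2.const_mul bi)
  have hym : @Measurable Ω ℝ (sigmaUpTo x0 eps k) _ y := hxm.sub measurable_const
  have hvm : @Measurable Ω ℝ (sigmaUpTo x0 eps k) _ v := hum.sub measurable_const
  have hGm : @Measurable Ω ℝ (sigmaUpTo x0 eps k) _ G :=
    (measurable_const.mul hym).add (measurable_const.mul hvm)
  have hindY : IndepFun y ε μ := indepFun_eps' hx0m hepsm hindep hk hym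
  have hyε2 : MemLp (fun ω => y ω * ε ω) 2 μ := memL2_mul_indep hy2 hε2 hindY
  have hxint : Integrable xk μ := hx2.integrable one_le_two
  have huint : Integrable uk μ := hu2.integrable one_le_two
  have hy0 : ∫ ω, y ω ∂μ = 0 := by
    rw [hy]
    rw [integral_sub hxint (integrable_const m)]
    simp [hm]
  have hv0 : ∫ ω, v ω ∂μ = 0 := by
    rw [hv]
    rw [integral_sub huint (integrable_const ub)]
    simp [hub]
  have hyε0 : ∫ ω, y ω * ε ω ∂μ = 0 :=
    integral_mul_indep_zero hy2.aestronglyMeasurable hε2.aestronglyMeasurable hindY hεmean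
  have hx1eq : x1 = fun ω => G ω + c0 + y ω * ε ω := by
    funext ω; rw [hdyn ω]
  have hx1L2 : MemLp x1 2 μ := by
    rw [hx1eq]
    exact (hG2.add (memLp_const c0)).add hyε2
  have hG0 : ∫ ω, G ω ∂μ = 0 := by
    rw [hG]
    rw [integral_add ((hy2.const_mul A).integrable one_le_two)
      ((hv2.const_mul bi).integrable one_le_two), integral_const_mul, integral_const_mul,
      hy0, hv0]
    ring
  have hGint : Integrable G μ := hG2.integrable one_le_two
  have hyεint : Integrable (fun ω => y ω * ε ω) μ := hyε2.integrable one_le_two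
  have hεint : Integrable ε μ := hε2.integrable one_le_two
  have hmean : ∫ ω, x1 ω ∂μ = c0 := by
    have h1 : ∫ ω, x1 ω ∂μ = ∫ ω, (G ω + c0) + y ω * ε ω ∂μ :=
      integral_congr_ae (Filter.Eventually.of_forall fun ω => by rw [hx1eq])
    have hGc : Integrable (fun ω => G ω + c0) μ := hGint.add (integrable_const c0)
    rw [h1, integral_add hGc hyεint, integral_add hGint (integrable_const c0), hG0, hyε0,
      integral_const]
    simp
  refine ⟨hx1L2, by rw [hmean], ?_⟩
  have hvarx1 : variance x1 μ = ∫ ω, (G ω + y ω * ε ω) ^ 2 ∂μ := by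
    rw [variance_eq' hx1L2, hmean]
    refine integral_congr_ae (Filter.Eventually.of_forall fun ω => ?_)
    rw [hx1eq]
    ring
  have hGy_int : Integrable (fun ω => G ω * y ω) μ := integrable_mul_L2 hG2 hy2
  have hGym : @Measurable Ω ℝ (sigmaUpTo x0 eps k) _ (fun ω => G ω * y ω) := hGm.mul hym
  have hindGy : IndepFun (fun ω => G ω * y ω) ε μ := indepFun_eps' hx0m hepsm hindep hk hGym
  have hGyε_int : Integrable (fun ω => G ω * y ω * ε ω) μ := by
    have h := hindGy.integrable_mul hGy_int hεint
    simpa [Pi.mul_def] using h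
  have hGyε0 : ∫ ω, G ω * y ω * ε ω ∂μ = 0 :=
    integral_mul_indep_zero hGy_int.aestronglyMeasurable hε2.aestronglyMeasurable hindGy hεmean
  have hy2sq : Integrable (fun ω => y ω ^ 2) μ := hy2.integrable_sq
  have hε2sq : Integrable (fun ω => ε ω ^ 2) μ := hε2.integrable_sq
  have hindsq : IndepFun (fun ω => y ω ^ 2) (fun ω => ε ω ^ 2) μ :=
    hindY.comp (measurable_id.pow_const 2) (measurable_id.pow_const 2)
  have hy2ε2_int : Integrable (fun ω => y ω ^ 2 * ε ω ^ 2) μ := by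
    have h := hindsq.integrable_mul hy2sq hε2sq
    simpa [Pi.mul_def] using h
  have hy2ε2 : ∫ ω, y ω ^ 2 * ε ω ^ 2 ∂μ = (∫ ω, y ω ^ 2 ∂μ) * ∫ ω, ε ω ^ 2 ∂μ :=
    hindsq.integral_mul_eq_mul_integral hy2sq.aestronglyMeasurable hε2sq.aestronglyMeasurable
  have hG2sq : Integrable (fun ω => G ω ^ 2) μ := hG2.integrable_sq
  have hsplit : ∫ ω, (G ω + y ω * ε ω) ^ 2 ∂μ
      = (∫ ω, G ω ^ 2 ∂μ) + (2 : ℝ) * (∫ ω, G ω * y ω * ε ω ∂μ)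
        + ∫ ω, y ω ^ 2 * ε ω ^ 2 ∂μ := by
    have hre : (fun ω => (G ω + y ω * ε ω) ^ 2)
        = fun ω => (G ω ^ 2 + 2 * (G ω * y ω * ε ω)) + y ω ^ 2 * ε ω ^ 2 := by
      funext ω; ring
    have hsum1 : Integrable (fun ω => G ω ^ 2 + 2 * (G ω * y ω * ε ω)) μ :=
      hG2sq.add (hGyε_int.const_mul 2)
    rw [hre, integral_add hsum1 hy2ε2_int, integral_add hG2sq (hGyε_int.const_mul 2),
      integral_const_mul]
  have hvarxk : variance xk μ = ∫ ω, y ω ^ 2 ∂μ := variance_eq' hx2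
  rw [hvarx1, hsplit, hGyε0, hy2ε2, ← hvarxk]
  simp only [hG, hy, hv]
  ring

end Indep

/-- Proposition 5 (variance-aware quartic game under multiplicative state-and-mean
dependent noise `(x_k − x̄_k)·ε_{k+1}`): the feedback strategies
`u*_{ik} = −(E_k⁻¹·c_k)_i·ā_k·(x_k − x̄_k) − (Ē_k⁻¹·c̄_k)_i·ā_k·x̄_k` form a Nash
equilibrium over adapted square-integrable strategies. -/
theorem multiplicative_noise_quartic_game_nash {Ω : Type*} [MeasurableSpace Ω]
    (μ : Measure Ω) [IsProbabilityMeasure μ]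
    (N I : ℕ) (hN : 1 ≤ N) (hI : 2 ≤ I)
    (a : ℕ → ℝ) (b : Fin I → ℕ → ℝ)
    (q qbar r rbar : Fin I → ℕ → ℝ) (qN qbarN : Fin I → ℝ)
    (hq : ∀ i k, k < N → 0 < q i k) (hqbar : ∀ i k, k < N → 0 < qbar i k)
    (hr : ∀ i k, k < N → 0 < r i k) (hrbar : ∀ i k, k < N → 0 < rbar i k)
    (hqN : ∀ i, 0 < qN i) (hqbarN : ∀ i, 0 < qbarN i)
    (x0 : Ω → ℝ) (hx0m : Measurable x0) (hx0L2 : MemLp x0 2 μ)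
    (hx04 : Integrable (fun ω => x0 ω ^ 4) μ)
    (eps : ℕ → Ω → ℝ) (hepsm : ∀ k, Measurable (eps k))
    (hepsL2 : ∀ k, 1 ≤ k → k ≤ N → MemLp (eps k) 2 μ)
    (hepsmean : ∀ k, 1 ≤ k → k ≤ N → ∫ ω, eps k ω ∂μ = 0)
    (hindep : iIndepFun
      (fun k : Fin (N + 1) => if (k : ℕ) = 0 then x0 else eps k) μ)
    (alphabar alpha kappa cbar c : Fin I → ℕ → ℝ)
    (Ebar E : ℕ → Matrix (Fin I) (Fin I) ℝ)
    (halphabarN : ∀ i, alphabar i N = qbarN i)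
    (halphaN : ∀ i, alpha i N = qN i)
    (hkappa : ∀ i k, k < N → kappa i k ^ 3 = alphabar i (k + 1) * b i k / rbar i k)
    (hcbar : ∀ i k, k < N → cbar i k = kappa i k / (1 + kappa i k * b i k))
    (hc : ∀ i k, k < N →
      c i k = alpha i (k + 1) * b i k / (r i k + alpha i (k + 1) * b i k ^ 2))
    (hEbard : ∀ k, k < N → ∀ i, Ebar k i i = 1)
    (hEbaro : ∀ k, k < N → ∀ i j, i ≠ j → Ebar k i j = cbar i k * b j k)
    (hEd : ∀ k, k < N → ∀ i, E k i i = 1)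
    (hEo : ∀ k, k < N → ∀ i j, i ≠ j → E k i j = c i k * b j k)
    (hEbarinv : ∀ k, k < N → IsUnit (Ebar k))
    (hEinv : ∀ k, k < N → IsUnit (E k))
    (hden1 : ∀ i k, k < N → 0 < 1 + kappa i k * b i k)
    (hden2 : ∀ i k, k < N → 0 < r i k + alpha i (k + 1) * b i k ^ 2)
    (halphabar : ∀ i k, k < N →
      alphabar i k = qbar i k
        + rbar i k * ((Ebar k)⁻¹.mulVec (fun l => cbar l k) i * a k) ^ 4
        + alphabar i (k + 1)
            * (a k - ∑ j, (Ebar k)⁻¹.mulVec (fun l => cbar l k) j * a k * b j k) ^ 4)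
    (halpha : ∀ i k, k < N →
      alpha i k = q i k + r i k * ((E k)⁻¹.mulVec (fun l => c l k) i * a k) ^ 2
        + alpha i (k + 1)
            * (a k - ∑ j, (E k)⁻¹.mulVec (fun l => c l k) j * a k * b j k) ^ 2
        + alpha i (k + 1) * ∫ ω, eps (k + 1) ω ^ 2 ∂μ)
    (xstar : ℕ → Ω → ℝ) (hxstar0 : xstar 0 = x0)
    (hxstar : ∀ k, k < N → ∀ ω, xstar (k + 1) ω
      = a k * xstar k ω
        + ∑ j, b j k * mfFeedback (Ebar k) (E k) (fun l => cbar l k) (fun l => c l k)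
            (a k) (∫ ω', xstar k ω' ∂μ) (xstar k ω) j
        + (xstar k ω - ∫ ω', xstar k ω' ∂μ) * eps (k + 1) ω) :
    ∀ i : Fin I, ∀ u : ℕ → Ω → ℝ,
      (∀ k, k < N → MemLp (u k) 2 μ) →
      (∀ k, k < N → @Measurable Ω ℝ (sigmaUpTo x0 eps k) _ (u k)) →
      ∀ x : ℕ → Ω → ℝ, x 0 = x0 →
      (∀ k, k < N → ∀ ω, x (k + 1) ω
        = a k * x k ω + b i k * u k ω
          + ∑ j ∈ Finset.univ.erase i,
              b j k * mfFeedback (Ebar k) (E k) (fun l => cbar l k) (fun l => c l k)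
                (a k) (∫ ω', x k ω' ∂μ) (x k ω) j
          + (x k ω - ∫ ω', x k ω' ∂μ) * eps (k + 1) ω) →
      quarticVarCost μ N (qN i) (qbarN i) (q i) (qbar i) (r i) (rbar i) xstar
          (fun k ω => mfFeedback (Ebar k) (E k) (fun l => cbar l k) (fun l => c l k)
            (a k) (∫ ω', xstar k ω' ∂μ) (xstar k ω) i)
        ≤ quarticVarCost μ N (qN i) (qbarN i) (q i) (qbar i) (r i) (rbar i) x u := by
  intro i u hu2g huadg x hx00 hdyng
  obtain ⟨d, hd⟩ : ∃ dd : ℕ → Fin I → ℝ,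
      dd = fun k j => (E k)⁻¹.mulVec (fun l => c l k) j := ⟨_, rfl⟩
  obtain ⟨db, hdb⟩ : ∃ dd : ℕ → Fin I → ℝ,
      dd = fun k j => (Ebar k)⁻¹.mulVec (fun l => cbar l k) j := ⟨_, rfl⟩
  obtain ⟨A, hA⟩ : ∃ A : ℕ → ℝ,
      A = fun k => a k * (1 - ∑ j ∈ Finset.univ.erase i, b j k * d k j) := ⟨_, rfl⟩
  obtain ⟨Ab, hAb⟩ : ∃ Ab : ℕ → ℝ,
      Ab = fun k => a k * (1 - ∑ j ∈ Finset.univ.erase i, b j k * db k j) := ⟨_, rfl⟩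
  have hdk : ∀ k j, (E k)⁻¹.mulVec (fun l => c l k) j = d k j := by
    intro k j; rw [hd]
  have hdbk : ∀ k j, (Ebar k)⁻¹.mulVec (fun l => cbar l k) j = db k j := by
    intro k j; rw [hdb]
  have hdi : ∀ k, k < N → d k i * a k = c i k * A k := by
    intro k hk
    have h := matrix_fp (E k) (hEinv k hk) (fun l => c l k) (fun l => b l k)
      (hEd k hk) (hEo k hk) i
    simp only [hdk] at h
    rw [h, hA]; ring
  have hdbi : ∀ k, k < N → db k i * a k = cbar i k * Ab k := by
    intro k hk
    have h := matrix_fp (Ebar k) (hEbarinv k hk) (fun l => cbar l k) (fun l => b l k)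
      (hEbard k hk) (hEbaro k hk) i
    simp only [hdbk] at h
    rw [h, hAb]; ring
  have hAfull : ∀ k, k < N →
      a k - ∑ j, d k j * a k * b j k = A k - b i k * (c i k * A k) := by
    intro k hk
    rw [← Finset.add_sum_erase Finset.univ (fun j => d k j * a k * b j k) (Finset.mem_univ i)]
    have hsum : ∑ j ∈ Finset.univ.erase i, d k j * a k * b j k
        = (∑ j ∈ Finset.univ.erase i, b j k * d k j) * a k := by
      rw [Finset.sum_mul]; exact Finset.sum_congr rfl fun j _ => by ring
    rw [hsum, ← hdi k hk, hA]; ring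
  have hAbfull : ∀ k, k < N →
      a k - ∑ j, db k j * a k * b j k = Ab k - b i k * (cbar i k * Ab k) := by
    intro k hk
    rw [← Finset.add_sum_erase Finset.univ (fun j => db k j * a k * b j k) (Finset.mem_univ i)]
    have hsum : ∑ j ∈ Finset.univ.erase i, db k j * a k * b j k
        = (∑ j ∈ Finset.univ.erase i, b j k * db k j) * a k := by
      rw [Finset.sum_mul]; exact Finset.sum_congr rfl fun j _ => by ring
    rw [hsum, ← hdbi k hk, hAb]; ring
  have halpha' : ∀ k, k < N → alpha i k
      = q i k + (r i k * (c i k * A k) ^ 2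
          + alpha i (k + 1) * (A k - b i k * (c i k * A k)) ^ 2)
        + alpha i (k + 1) * ∫ ω, eps (k + 1) ω ^ 2 ∂μ := by
    intro k hk
    rw [halpha i k hk]
    simp only [hdk]
    rw [hdi k hk, hAfull k hk]
    ring
  have halphabar' : ∀ k, k < N → alphabar i k
      = qbar i k + (rbar i k * (cbar i k * Ab k) ^ 4
          + alphabar i (k + 1) * (Ab k - b i k * (cbar i k * Ab k)) ^ 4) := by
    intro k hk
    rw [halphabar i k hk]
    simp only [hdbk]
    rw [hdbi k hk, hAbfull k hk]
    ring
  have hab_pos : ∀ k, k ≤ N → 0 < alphabar i k := by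
    have haux : ∀ j k, N - k ≤ j → k ≤ N → 0 < alphabar i k := by
      intro j
      induction j with
      | zero =>
        intro k h1 h2
        have hkN : k = N := by omega
        rw [hkN, halphabarN]; exact hqbarN i
      | succ j ih =>
        intro k h1 h2
        rcases Nat.eq_or_lt_of_le h2 with he | hlt
        · rw [he, halphabarN]; exact hqbarN i
        · have h3 := ih (k + 1) (by omega) (by omega)
          rw [halphabar i k hlt]
          have t1 : 0 ≤ rbar i k * ((Ebar k)⁻¹.mulVec (fun l => cbar l k) i * a k) ^ 4 :=
            mul_nonneg (hrbar i k hlt).le (by positivity)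
          have t2 : 0 ≤ alphabar i (k + 1)
              * (a k - ∑ j, (Ebar k)⁻¹.mulVec (fun l => cbar l k) j * a k * b j k) ^ 4 :=
            mul_nonneg h3.le (by positivity)
          have := hqbar i k hlt
          linarith
    exact fun k hk => haux (N - k) k le_rfl hk
  -- the master verification lemma
  have key : ∀ (z w : ℕ → Ω → ℝ),
      z 0 = x0 →
      (∀ k, k < N →
        (MemLp (z k) 2 μ ∧ @Measurable Ω ℝ (sigmaUpTo x0 eps k) _ (z k)) →
        MemLp (w k) 2 μ ∧ @Measurable Ω ℝ (sigmaUpTo x0 eps k) _ (w k)) →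
      (∀ k, k < N → ∀ ω, z (k + 1) ω
        = a k * z k ω + b i k * w k ω
          + ∑ j ∈ Finset.univ.erase i,
              b j k * mfFeedback (Ebar k) (E k) (fun l => cbar l k) (fun l => c l k)
                (a k) (∫ ω', z k ω' ∂μ) (z k ω) j
          + (z k ω - ∫ ω', z k ω' ∂μ) * eps (k + 1) ω) →
      (alpha i 0 * variance x0 μ + alphabar i 0 * (∫ ω, x0 ω ∂μ) ^ 4
          ≤ quarticVarCost μ N (qN i) (qbarN i) (q i) (qbar i) (r i) (rbar i) z w)
      ∧ ((∀ k, k < N → ∀ ω, w k ω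
            = mfFeedback (Ebar k) (E k) (fun l => cbar l k) (fun l => c l k)
                (a k) (∫ ω', z k ω' ∂μ) (z k ω) i) →
          quarticVarCost μ N (qN i) (qbarN i) (q i) (qbar i) (r i) (rbar i) z w
            = alpha i 0 * variance x0 μ + alphabar i 0 * (∫ ω, x0 ω ∂μ) ^ 4) := by
    intro z w hz0 hw hdyn
    -- dynamics in centred form
    have hdyn' : ∀ k, k < N → ∀ ω, z (k + 1) ω
        = (A k * (z k ω - ∫ x', z k x' ∂μ) + b i k * (w k ω - ∫ x', w k x' ∂μ))
          + (Ab k * (∫ x', z k x' ∂μ) + b i k * (∫ x', w k x' ∂μ))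
          + (z k ω - ∫ x', z k x' ∂μ) * eps (k + 1) ω := by
      intro k hk ω
      rw [hdyn k hk ω]
      simp only [mfFeedback, hdk, hdbk]
      rw [sum_feedback, hA, hAb]
      ring
    -- invariants along the trajectory
    have hinv : ∀ k, k ≤ N →
        MemLp (z k) 2 μ ∧ @Measurable Ω ℝ (sigmaUpTo x0 eps k) _ (z k) := by
      intro k
      induction k with
      | zero =>
        intro _
        rw [hz0]
        exact ⟨hx0L2, measurable_x0_sigmaUpTo x0 eps 0⟩
      | succ k ih =>
        intro hk1
        have hk : k < N := hk1
        obtain ⟨hz2, hzm⟩ := ih hk.le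
        obtain ⟨hw2, hwm⟩ := hw k hk ⟨hz2, hzm⟩
        refine ⟨(step_main hx0m hepsm hepsL2 hepsmean hindep hk (A k) (Ab k) (b i k)
          hz2 hzm hw2 hwm (hdyn' k hk)).1, ?_⟩
        have hzm' : @Measurable Ω ℝ (sigmaUpTo x0 eps (k + 1)) _ (z k) :=
          hzm.mono (sigmaUpTo_mono x0 eps (Nat.le_succ k)) le_rfl
        have hwm' : @Measurable Ω ℝ (sigmaUpTo x0 eps (k + 1)) _ (w k) :=
          hwm.mono (sigmaUpTo_mono x0 eps (Nat.le_succ k)) le_rfl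
        have hεm' : @Measurable Ω ℝ (sigmaUpTo x0 eps (k + 1)) _ (eps (k + 1)) :=
          measurable_eps_sigmaUpTo x0 eps (by omega) le_rfl
        have hze : z (k + 1) = fun ω =>
            (A k * (z k ω - ∫ x', z k x' ∂μ) + b i k * (w k ω - ∫ x', w k x' ∂μ))
              + (Ab k * (∫ x', z k x' ∂μ) + b i k * (∫ x', w k x' ∂μ))
              + (z k ω - ∫ x', z k x' ∂μ) * eps (k + 1) ω := funext (hdyn' k hk)
        rw [hze]
        exact (((measurable_const.mul (hzm'.sub measurable_const)).add
          (measurable_const.mul (hwm'.sub measurable_const))).add measurable_const).add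
          ((hzm'.sub measurable_const).mul hεm')
    -- one-step relations
    have hstep : ∀ k, k < N →
        (alpha i k * variance (z k) μ + alphabar i k * (∫ ω, z k ω ∂μ) ^ 4
          ≤ (q i k * variance (z k) μ + qbar i k * (∫ ω, z k ω ∂μ) ^ 4
              + r i k * variance (w k) μ + rbar i k * (∫ ω, w k ω ∂μ) ^ 4)
            + (alpha i (k + 1) * variance (z (k + 1)) μ
              + alphabar i (k + 1) * (∫ ω, z (k + 1) ω ∂μ) ^ 4))
        ∧ ((∀ ω, w k ω = mfFeedback (Ebar k) (E k) (fun l => cbar l k) (fun l => c l k)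
              (a k) (∫ ω', z k ω' ∂μ) (z k ω) i) →
            alpha i k * variance (z k) μ + alphabar i k * (∫ ω, z k ω ∂μ) ^ 4
              = (q i k * variance (z k) μ + qbar i k * (∫ ω, z k ω ∂μ) ^ 4
                  + r i k * variance (w k) μ + rbar i k * (∫ ω, w k ω ∂μ) ^ 4)
                + (alpha i (k + 1) * variance (z (k + 1)) μ
                  + alphabar i (k + 1) * (∫ ω, z (k + 1) ω ∂μ) ^ 4)) := by
      intro k hk
      obtain ⟨hz2, hzm⟩ := hinv k hk.le
      obtain ⟨hw2, hwm⟩ := hw k hk ⟨hz2, hzm⟩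
      obtain ⟨hz1L2, hmean, hvar⟩ := step_main hx0m hepsm hepsL2 hepsmean hindep hk
        (A k) (Ab k) (b i k) hz2 hzm hw2 hwm (hdyn' k hk)
      have hvarz : variance (z k) μ = ∫ ω, (z k ω - ∫ x', z k x' ∂μ) ^ 2 ∂μ :=
        variance_eq' hz2
      have hvarw : variance (w k) μ = ∫ ω, (w k ω - ∫ x', w k x' ∂μ) ^ 2 ∂μ :=
        variance_eq' hw2
      have hy2 : MemLp (fun ω => z k ω - ∫ x', z k x' ∂μ) 2 μ := hz2.sub (memLp_const _)
      have hv2 : MemLp (fun ω => w k ω - ∫ x', w k x' ∂μ) 2 μ := hw2.sub (memLp_const _)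
      have hG2 : MemLp (fun ω => A k * (z k ω - ∫ x', z k x' ∂μ)
          + b i k * (w k ω - ∫ x', w k x' ∂μ)) 2 μ :=
        (hy2.const_mul _).add (hv2.const_mul _)
      have hsplitRHS : ∫ ω, (r i k * (w k ω - ∫ x', w k x' ∂μ) ^ 2
            + alpha i (k + 1) * (A k * (z k ω - ∫ x', z k x' ∂μ)
              + b i k * (w k ω - ∫ x', w k x' ∂μ)) ^ 2) ∂μ
          = r i k * variance (w k) μ
            + alpha i (k + 1) * ∫ ω, (A k * (z k ω - ∫ x', z k x' ∂μ)
              + b i k * (w k ω - ∫ x', w k x' ∂μ)) ^ 2 ∂μ := by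
        rw [integral_add (hv2.integrable_sq.const_mul _) (hG2.integrable_sq.const_mul _),
          integral_const_mul, integral_const_mul, hvarw]
      have hquad : (r i k * (c i k * A k) ^ 2
            + alpha i (k + 1) * (A k - b i k * (c i k * A k)) ^ 2) * variance (z k) μ
          ≤ r i k * variance (w k) μ
            + alpha i (k + 1) * ∫ ω, (A k * (z k ω - ∫ x', z k x' ∂μ)
              + b i k * (w k ω - ∫ x', w k x' ∂μ)) ^ 2 ∂μ := by
        have hpt : ∀ ω, (r i k * (c i k * A k) ^ 2
              + alpha i (k + 1) * (A k - b i k * (c i k * A k)) ^ 2)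
                * (z k ω - ∫ x', z k x' ∂μ) ^ 2
            ≤ r i k * (w k ω - ∫ x', w k x' ∂μ) ^ 2
              + alpha i (k + 1) * (A k * (z k ω - ∫ x', z k x' ∂μ)
                + b i k * (w k ω - ∫ x', w k x' ∂μ)) ^ 2 :=
          fun ω => quad_step _ _ _ (hden2 i k hk) (hc i k hk)
        have hintL : Integrable (fun ω => (r i k * (c i k * A k) ^ 2
            + alpha i (k + 1) * (A k - b i k * (c i k * A k)) ^ 2)
              * (z k ω - ∫ x', z k x' ∂μ) ^ 2) μ := hy2.integrable_sq.const_mul _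
        have hintR : Integrable (fun ω => r i k * (w k ω - ∫ x', w k x' ∂μ) ^ 2
            + alpha i (k + 1) * (A k * (z k ω - ∫ x', z k x' ∂μ)
              + b i k * (w k ω - ∫ x', w k x' ∂μ)) ^ 2) μ :=
          (hv2.integrable_sq.const_mul _).add (hG2.integrable_sq.const_mul _)
        have h := integral_mono hintL hintR hpt
        rw [integral_const_mul, hsplitRHS] at h
        rw [hvarz]
        exact h
      have hquart : (rbar i k * (cbar i k * Ab k) ^ 4
            + alphabar i (k + 1) * (Ab k - b i k * (cbar i k * Ab k)) ^ 4)
              * (∫ ω, z k ω ∂μ) ^ 4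
          ≤ rbar i k * (∫ ω, w k ω ∂μ) ^ 4
            + alphabar i (k + 1)
              * (Ab k * (∫ ω, z k ω ∂μ) + b i k * (∫ ω, w k ω ∂μ)) ^ 4 :=
        quartic_step _ _ _ (hrbar i k hk) (hab_pos (k + 1) (by omega)) (hkappa i k hk)
          (hden1 i k hk) (hcbar i k hk)
      constructor
      · rw [hvar, hmean, halpha' k hk, halphabar' k hk]
        nlinarith [hquad, hquart]
      · intro hfb
        have hy0 : ∫ ω, (z k ω - ∫ x', z k x' ∂μ) ∂μ = 0 := by
          rw [integral_sub (hz2.integrable one_le_two) (integrable_const _), integral_const]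
          simp
        have hwid : ∀ ω, w k ω = -(db k i) * a k * (∫ ω', z k ω' ∂μ)
            + (-(d k i * a k)) * (z k ω - ∫ ω', z k ω' ∂μ) := by
          intro ω
          rw [hfb ω]
          simp only [mfFeedback, hdk, hdbk]
          ring
        have hub : ∫ ω, w k ω ∂μ = -(db k i) * a k * (∫ ω', z k ω' ∂μ) := by
          have h1 : ∫ ω, w k ω ∂μ = ∫ ω, (-(db k i) * a k * (∫ ω', z k ω' ∂μ)
              + (-(d k i * a k)) * (z k ω - ∫ ω', z k ω' ∂μ)) ∂μ :=
            integral_congr_ae (Filter.Eventually.of_forall fun ω => by rw [hwid ω])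
          rw [h1, integral_add (integrable_const _)
            ((hy2.integrable one_le_two).const_mul _), integral_const, integral_const_mul,
            hy0]
          simp
        have hveq : ∀ ω, w k ω - ∫ x', w k x' ∂μ
            = -(c i k * A k * (z k ω - ∫ x', z k x' ∂μ)) := by
          intro ω
          rw [hwid ω, hub, ← hdi k hk]
          ring
        have hqeq : r i k * variance (w k) μ
              + alpha i (k + 1) * ∫ ω, (A k * (z k ω - ∫ x', z k x' ∂μ)
                + b i k * (w k ω - ∫ x', w k x' ∂μ)) ^ 2 ∂μ
            = (r i k * (c i k * A k) ^ 2
                + alpha i (k + 1) * (A k - b i k * (c i k * A k)) ^ 2)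
                  * variance (z k) μ := by
          have hpt2 : ∀ ω, r i k * (w k ω - ∫ x', w k x' ∂μ) ^ 2
              + alpha i (k + 1) * (A k * (z k ω - ∫ x', z k x' ∂μ)
                + b i k * (w k ω - ∫ x', w k x' ∂μ)) ^ 2
              = (r i k * (c i k * A k) ^ 2
                + alpha i (k + 1) * (A k - b i k * (c i k * A k)) ^ 2)
                  * (z k ω - ∫ x', z k x' ∂μ) ^ 2 := by
            intro ω
            rw [hveq ω]
            exact quad_step_eq (A k) (z k ω - ∫ x', z k x' ∂μ)
          calc r i k * variance (w k) μ
              + alpha i (k + 1) * ∫ ω, (A k * (z k ω - ∫ x', z k x' ∂μ)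
                + b i k * (w k ω - ∫ x', w k x' ∂μ)) ^ 2 ∂μ
              = ∫ ω, (r i k * (w k ω - ∫ x', w k x' ∂μ) ^ 2
                + alpha i (k + 1) * (A k * (z k ω - ∫ x', z k x' ∂μ)
                  + b i k * (w k ω - ∫ x', w k x' ∂μ)) ^ 2) ∂μ := hsplitRHS.symm
            _ = ∫ ω, (r i k * (c i k * A k) ^ 2
                + alpha i (k + 1) * (A k - b i k * (c i k * A k)) ^ 2)
                  * (z k ω - ∫ x', z k x' ∂μ) ^ 2 ∂μ :=
                integral_congr_ae (Filter.Eventually.of_forall hpt2)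
            _ = (r i k * (c i k * A k) ^ 2
                + alpha i (k + 1) * (A k - b i k * (c i k * A k)) ^ 2)
                  * variance (z k) μ := by rw [integral_const_mul, hvarz]
        have hubq : ∫ ω, w k ω ∂μ = -(cbar i k * Ab k * (∫ ω, z k ω ∂μ)) := by
          rw [hub, ← hdbi k hk]
          ring
        have hqteq : rbar i k * (∫ ω, w k ω ∂μ) ^ 4
              + alphabar i (k + 1)
                * (Ab k * (∫ ω, z k ω ∂μ) + b i k * (∫ ω, w k ω ∂μ)) ^ 4
            = (rbar i k * (cbar i k * Ab k) ^ 4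
                + alphabar i (k + 1) * (Ab k - b i k * (cbar i k * Ab k)) ^ 4)
                  * (∫ ω, z k ω ∂μ) ^ 4 := by
          rw [hubq]
          exact quartic_step_eq (Ab k) (∫ ω, z k ω ∂μ)
        rw [hvar, hmean, halpha' k hk, halphabar' k hk]
        linear_combination -hqeq - hqteq
    -- telescoping
    have hS0 : alpha i 0 * variance (z 0) μ + alphabar i 0 * (∫ ω, z 0 ω ∂μ) ^ 4
        = alpha i 0 * variance x0 μ + alphabar i 0 * (∫ ω, x0 ω ∂μ) ^ 4 := by
      rw [hz0]
    have hSN : alpha i N * variance (z N) μ + alphabar i N * (∫ ω, z N ω ∂μ) ^ 4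
        = qN i * variance (z N) μ + qbarN i * (∫ ω, z N ω ∂μ) ^ 4 := by
      rw [halphaN, halphabarN]
    constructor
    · have h := telescope_le
        (fun k => alpha i k * variance (z k) μ + alphabar i k * (∫ ω, z k ω ∂μ) ^ 4)
        (fun k => q i k * variance (z k) μ + qbar i k * (∫ ω, z k ω ∂μ) ^ 4
          + r i k * variance (w k) μ + rbar i k * (∫ ω, w k ω ∂μ) ^ 4)
        N (fun k hk => (hstep k hk).1)
      rw [hS0, hSN] at h
      rw [quarticVarCost]
      linarith
    · intro hfb
      have h := telescope_eq
        (fun k => alpha i k * variance (z k) μ + alphabar i k * (∫ ω, z k ω ∂μ) ^ 4)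
        (fun k => q i k * variance (z k) μ + qbar i k * (∫ ω, z k ω ∂μ) ^ 4
          + r i k * variance (w k) μ + rbar i k * (∫ ω, w k ω ∂μ) ^ 4)
        N (fun k hk => (hstep k hk).2 (hfb k hk))
      rw [hS0, hSN] at h
      rw [quarticVarCost]
      linarith
  -- apply the master lemma to the deviation and to the equilibrium trajectory
  have hgen := (key x u hx00 (fun k hk _ => ⟨hu2g k hk, huadg k hk⟩) hdyng).1
  have hstar := key xstar
    (fun k ω => mfFeedback (Ebar k) (E k) (fun l => cbar l k) (fun l => c l k)
      (a k) (∫ ω', xstar k ω' ∂μ) (xstar k ω) i)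
    hxstar0
    (fun k hk hz => by
      obtain ⟨hz2, hzm⟩ := hz
      have heq : (fun ω => mfFeedback (Ebar k) (E k) (fun l => cbar l k) (fun l => c l k)
          (a k) (∫ ω', xstar k ω' ∂μ) (xstar k ω) i)
          = fun ω => (-(((Ebar k)⁻¹.mulVec (fun l => cbar l k)) i * a k
              * (∫ ω', xstar k ω' ∂μ)))
            + (-(((E k)⁻¹.mulVec (fun l => c l k)) i * a k))
              * (xstar k ω - ∫ ω', xstar k ω' ∂μ) := by
        funext ω; simp only [mfFeedback]; ring
      constructor
      · show MemLp (fun ω => mfFeedback (Ebar k) (E k) (fun l => cbar l k)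
          (fun l => c l k) (a k) (∫ ω', xstar k ω' ∂μ) (xstar k ω) i) 2 μ
        rw [heq]
        have h1 : MemLp (fun ω => xstar k ω - ∫ ω', xstar k ω' ∂μ) 2 μ := hz2.sub (memLp_const _)
        exact (memLp_const (μ := μ) (p := 2) (-(((Ebar k)⁻¹.mulVec (fun l => cbar l k)) i * a k
          * (∫ ω', xstar k ω' ∂μ)))).add (h1.const_mul (-(((E k)⁻¹.mulVec (fun l => c l k)) i * a k)))
      · show @Measurable Ω ℝ (sigmaUpTo x0 eps k) _
          (fun ω => mfFeedback (Ebar k) (E k) (fun l => cbar l k)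
            (fun l => c l k) (a k) (∫ ω', xstar k ω' ∂μ) (xstar k ω) i)
        rw [heq]
        exact measurable_const.add (measurable_const.mul (hzm.sub measurable_const)))
    (fun k hk ω => by
      rw [hxstar k hk ω,
        ← Finset.add_sum_erase Finset.univ
          (fun j => b j k * mfFeedback (Ebar k) (E k) (fun l => cbar l k)
            (fun l => c l k) (a k) (∫ ω', xstar k ω' ∂μ) (xstar k ω) j)
          (Finset.mem_univ i)]
      ring)
  rw [hstar.2 (fun k hk ω => rfl)]
  exact hgen
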